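/- arXiv:2409.10686 — 9 statements merged into one kernel-verified Lean document; each statement's English description precedes it below -/
import Mathlib

section
/- All three first-order partial derivatives of F vanish at the point (x1,x2,x4) = (1/2, 3/2, 1/2); that is, (1/2, 3/2, 1/2) is a critical point of the normalized scalar curvature F (corresponding to the non-diagonal Einstein metric g5 = (1/2, 3/2, 1, 1/2)). -/
open Real

/-- Scalar curvature of the invariant metric `g = (x1,x2,x3,x4)` on `M = H×H/ΔK`,
where `d = dim K` and `n = dim H/K`. -/
noncomputable def Scal (d n x1 x2 x3 x4 : ℝ) : ℝ :=
  d / (2 * x3) -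
    n * (x2 ^ 2 * x3 ^ 2 + x1 ^ 2 * (4 * x2 ^ 2 - 8 * x2 * x3 + x3 ^ 2)
        + 8 * x2 * x3 * x4 ^ 2 + 8 * x1 * x3 * (x4 ^ 2 - x2 ^ 2)
        - 2 * x4 ^ 2 * (x3 ^ 2 + 2 * x4 ^ 2)) /
      (16 * x3 * (x4 ^ 2 - x1 * x2) ^ 2)

/-- Normalized scalar curvature `F(x1,x2,x4) = Scal(x1,x2,1,x4)·(x1·x2 − x4²)^{n/(d+2n)}`. -/
noncomputable def F (d n x1 x2 x4 : ℝ) : ℝ :=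
  Scal d n x1 x2 1 x4 * (x1 * x2 - x4 ^ 2) ^ (n / (d + 2 * n))

/-- Partial derivative of a function of three real variables in the `i`-th variable. -/
noncomputable def pd (i : Fin 3) (f : ℝ → ℝ → ℝ → ℝ) : ℝ → ℝ → ℝ → ℝ :=
  ![fun x y z => deriv (fun t => f t y z) x,
    fun x y z => deriv (fun t => f x t z) y,
    fun x y z => deriv (fun t => f x y t) z] i

/-- Hessian matrix of second-order partial derivatives at `(x, y, z)`. -/
noncomputable def Hess (f : ℝ → ℝ → ℝ → ℝ) (x y z : ℝ) : Matrix (Fin 3) (Fin 3) ℝ :=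
  Matrix.of fun i j => pd i (pd j f) x y z

/-- derivative of a generic rational slice -/
lemma aux_rat (nn q a0 a1 a2 a3 a4 e m k x D : ℝ)
    (h : 16 * (e + (m * x + k * x ^ 2)) ^ 2 ≠ 0)
    (hD : D = -((nn * (a1 * 1 + a2 * ((2:ℕ) * x ^ (2-1) * 1) + a3 * ((3:ℕ) * x ^ (3-1) * 1)
            + a4 * ((4:ℕ) * x ^ (4-1) * 1))
          * (16 * (e + (m * x + k * x ^ 2)) ^ 2)
        - nn * (a0 + (a1 * x + a2 * x ^ 2 + a3 * x ^ 3 + a4 * x ^ 4))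
          * (16 * ((2:ℕ) * (e + (m * x + k * x ^ 2)) ^ (2-1) * (m * 1 + k * ((2:ℕ) * x ^ (2-1) * 1)))))
        / (16 * (e + (m * x + k * x ^ 2)) ^ 2) ^ 2)) :
    HasDerivAt (fun t : ℝ => q - nn * (a0 + (a1 * t + a2 * t ^ 2 + a3 * t ^ 3 + a4 * t ^ 4))
      / (16 * (e + (m * t + k * t ^ 2)) ^ 2)) D x := by
  have hid := hasDerivAt_id x
  have hP := ((((hid.const_mul a1).add ((hid.pow 2).const_mul a2)).add
      ((hid.pow 3).const_mul a3)).add ((hid.pow 4).const_mul a4)).const_add a0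
  have hQ := (((hid.const_mul m).add ((hid.pow 2).const_mul k)).const_add e).pow 2
  have H := ((hP.const_mul nn).div (hQ.const_mul 16) h).const_sub q
  rw [hD]
  exact H

lemma key (c S' b' S : ℝ) (f g : ℝ → ℝ) (x : ℝ)
    (hf : HasDerivAt f S' x) (hg : HasDerivAt g b' x)
    (hfx : f x = S) (hgx : g x = 1/2)
    (hrel : S' + 2 * c * b' * S = 0) :
    deriv (fun t => f t * g t ^ c) x = 0 := by
  have hgne : g x ≠ 0 := by rw [hgx]; norm_num
  have hg' : HasDerivAt (fun t => g t ^ c) (b' * c * g x ^ (c - 1)) x :=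
    hg.rpow_const (Or.inl hgne)
  have h := (hf.mul hg').deriv
  rw [show (fun t => f t * g t ^ c) = (f * fun t => g t ^ c) from rfl, h, hfx, hgx]
  have h2 : ((1:ℝ)/2) ^ (c - 1) = (1/2 : ℝ) ^ c * 2 := by
    rw [Real.rpow_sub (by norm_num), Real.rpow_one]; ring
  rw [h2]
  linear_combination ((1:ℝ)/2) ^ c * hrel

/-- `(1/2, 3/2, 1/2)` is a critical point of the normalized scalar curvature `F`
(corresponding to the non-diagonal Einstein metric `g5 = (1/2, 3/2, 1, 1/2)`). -/
theorem g5_critical (d n : ℝ) (hd : 0 < d) (hn : 0 < n) :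
    ∀ i : Fin 3, pd i (F d n) (1/2) (3/2) (1/2) = 0 := by
  have hdn : d + 2 * n ≠ 0 := by positivity
  intro i
  fin_cases i <;>
    simp only [pd, Matrix.cons_val_zero, Matrix.cons_val_one, Matrix.head_cons,
      Matrix.cons_val_two, Matrix.tail_cons, F]
  · -- x1 direction
    have hf : HasDerivAt (fun t : ℝ => Scal d n t (3/2) 1 (1/2)) (-(3*n)/2) (1/2) := by
      have heq : (fun t : ℝ => Scal d n t (3/2) 1 (1/2))
          = fun t : ℝ => d/2 - n * ((9/2 : ℝ) + ((-16) * t + (-2) * t ^ 2 + 0 * t ^ 3 + 0 * t ^ 4))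
            / (16 * ((1/4 : ℝ) + ((-(3/2)) * t + 0 * t ^ 2)) ^ 2) := by
        funext t; simp only [Scal]; ring
      rw [heq]
      exact aux_rat n (d/2) (9/2) (-16) (-2) 0 0 (1/4) (-(3/2)) 0 (1/2) _ (by norm_num)
        (by push_cast; norm_num; ring)
    have hg : HasDerivAt (fun t : ℝ => t * (3/2) - (1/2 : ℝ) ^ 2) (3/2) (1/2) := by
      have := ((hasDerivAt_id (1/2 : ℝ)).mul_const (3/2)).sub_const ((1/2 : ℝ) ^ 2)
      exact this.congr_deriv (by norm_num)
    exact key (n/(d+2*n)) (-(3*n)/2) (3/2) (d/2 + n) _ _ (1/2) hf hg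
      (by simp only [Scal]; norm_num; ring) (by norm_num) (by field_simp; ring)
  · -- x2 direction
    have hf : HasDerivAt (fun t : ℝ => Scal d n (1/2) t 1 (1/2)) (-n/2) (3/2) := by
      have heq : (fun t : ℝ => Scal d n (1/2) t 1 (1/2))
          = fun t : ℝ => d/2 - n * ((1/2 : ℝ) + (0 * t + (-2) * t ^ 2 + 0 * t ^ 3 + 0 * t ^ 4))
            / (16 * ((1/4 : ℝ) + ((-(1/2)) * t + 0 * t ^ 2)) ^ 2) := by
        funext t; simp only [Scal]; ring
      rw [heq]
      exact aux_rat n (d/2) (1/2) 0 (-2) 0 0 (1/4) (-(1/2)) 0 (3/2) _ (by norm_num)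
        (by push_cast; norm_num; ring)
    have hg : HasDerivAt (fun t : ℝ => (1/2 : ℝ) * t - (1/2 : ℝ) ^ 2) (1/2) (3/2) := by
      have := ((hasDerivAt_id (3/2 : ℝ)).const_mul (1/2 : ℝ)).sub_const ((1/2 : ℝ) ^ 2)
      exact this.congr_deriv (by norm_num)
    exact key (n/(d+2*n)) (-n/2) (1/2) (d/2 + n) _ _ (3/2) hf hg
      (by simp only [Scal]; norm_num; ring) (by norm_num) (by field_simp; ring)
  · -- x4 direction
    have hf : HasDerivAt (fun t : ℝ => Scal d n (1/2) (3/2) 1 t) n (1/2) := by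
      have heq : (fun t : ℝ => Scal d n (1/2) (3/2) 1 t)
          = fun t : ℝ => d/2 - n * ((-29/4 : ℝ) + (0 * t + 14 * t ^ 2 + 0 * t ^ 3 + (-4) * t ^ 4))
            / (16 * ((-(3/4) : ℝ) + (0 * t + 1 * t ^ 2)) ^ 2) := by
        funext t; simp only [Scal]; ring
      rw [heq]
      exact aux_rat n (d/2) (-29/4) 0 14 0 (-4) (-(3/4)) 0 1 (1/2) _ (by norm_num)
        (by push_cast; norm_num; ring)
    have hg : HasDerivAt (fun t : ℝ => (1/2 : ℝ) * (3/2) - t ^ 2) (-1) (1/2) := by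
      have := (hasDerivAt_pow 2 (1/2 : ℝ)).const_sub ((1/2 : ℝ) * (3/2))
      exact this.congr_deriv (by norm_num)
    exact key (n/(d+2*n)) n (-1) (d/2 + n) _ _ (1/2) hf hg
      (by simp only [Scal]; norm_num; ring) (by norm_num) (by field_simp; ring)
end

section
/- The second-order partial derivative ∂²F/∂x1² at the point (1/2, 3/2, 1/2) equals −2^{−n/(d+2n)}·n·(7d + 23n)/(2(d + 2n)); in particular it is negative. -/
open Real

noncomputable def Pf (t : ℝ) : ℝ := t * (3/2) - 1/4
noncomputable def Sf (d n t : ℝ) : ℝ := d/2 + n*(2*t^2+16*t-9/2)/(6*t-1)^2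
noncomputable def S1f (d n t : ℝ) : ℝ := n*(38-100*t)/(6*t-1)^3
noncomputable def S2f (d n t : ℝ) : ℝ := n*(1200*t-584)/(6*t-1)^4

lemma hPf (t : ℝ) : HasDerivAt Pf (3/2) t := by
  have h : HasDerivAt (fun x : ℝ => x * (3/2) - 1/4) (1 * (3/2)) t :=
    ((hasDerivAt_id' t).mul_const _).sub_const _
  have : (1 : ℝ) * (3/2) = 3/2 := by norm_num
  exact this ▸ h

lemma hden2 (t : ℝ) : HasDerivAt (fun t : ℝ => (6*t-1)^2) (12*(6*t-1)) t := by
  have h : HasDerivAt (fun t : ℝ => (6*t-1)^2) _ t := (((hasDerivAt_id' t).const_mul 6).sub_const 1).pow 2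
  convert h using 1
  push_cast; ring

lemma hden3 (t : ℝ) : HasDerivAt (fun t : ℝ => (6*t-1)^3) (18*(6*t-1)^2) t := by
  have h : HasDerivAt (fun t : ℝ => (6*t-1)^3) _ t := (((hasDerivAt_id' t).const_mul 6).sub_const 1).pow 3
  convert h using 1
  push_cast; ring

lemma hSf (d n t : ℝ) (h : 6*t - 1 ≠ 0) : HasDerivAt (Sf d n) (S1f d n t) t := by
  have hnum : HasDerivAt (fun t : ℝ => n*(2*t^2+16*t-9/2)) (n*(4*t+16)) t := by
    have h2 : HasDerivAt (fun t : ℝ => n*(2*t^2+16*t-9/2)) _ t := ((((hasDerivAt_pow 2 t).const_mul 2).add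
      ((hasDerivAt_id' t).const_mul 16)).sub_const (9/2)).const_mul n
    convert h2 using 1
    push_cast; ring
  have hdiv := hnum.div (hden2 t) (pow_ne_zero 2 h)
  have hsum : HasDerivAt (Sf d n) _ t := (hasDerivAt_const t (d/2)).add hdiv
  convert hsum using 1
  unfold S1f
  field_simp [S1f]
  ring

lemma hS1f (d n t : ℝ) (h : 6*t - 1 ≠ 0) : HasDerivAt (S1f d n) (S2f d n t) t := by
  have hnum : HasDerivAt (fun t : ℝ => n*(38-100*t)) (n*(-100)) t := by
    have h2 : HasDerivAt (fun t : ℝ => n*(38-100*t)) _ t := (((hasDerivAt_const t (38:ℝ)).sub ((hasDerivAt_id' t).const_mul 100))).const_mul n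
    convert h2 using 1
    ring
  have hdiv : HasDerivAt (S1f d n) _ t := hnum.div (hden3 t) (pow_ne_zero 3 h)
  convert hdiv using 1
  unfold S2f
  field_simp [S2f]
  ring

lemma hFeq (d n : ℝ) {s : ℝ} (hs : 1/6 < s) :
    F d n s (3/2) (1/2) = Sf d n s * Pf s ^ (n/(d+2*n)) := by
  have h6 : 6*s - 1 ≠ 0 := by nlinarith
  have h2 : ((1/2:ℝ)^2 - s*(3/2)) ≠ 0 := by intro hc; apply h6; nlinarith
  have hbase : s * (3/2) - (1/2:ℝ)^2 = Pf s := by norm_num [Pf]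
  unfold F Scal
  rw [hbase]
  congr 1
  have hrw : (16 * 1 * (((1:ℝ)/2) ^ 2 - s * (3/2)) ^ 2) = (6*s-1)^2 := by ring
  rw [Sf, hrw]
  rw [div_add_div _ _ (by norm_num : (2:ℝ) ≠ 0) (pow_ne_zero 2 h6),
    div_sub_div _ _ (by norm_num : (2*1:ℝ) ≠ 0) (pow_ne_zero 2 h6), div_eq_div_iff]
  · ring
  · positivity
  · positivity

lemma hkey (d n t : ℝ) (ht : 1/6 < t) :
    HasDerivAt (fun s => F d n s (3/2) (1/2))
      (S1f d n t * Pf t ^ (n/(d+2*n))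
        + Sf d n t * (3/2 * (n/(d+2*n)) * Pf t ^ (n/(d+2*n) - 1))) t := by
  have hPpos : 0 < Pf t := by rw [Pf]; linarith
  have h6 : 6*t - 1 ≠ 0 := by nlinarith
  have hprod := (hSf d n t h6).mul ((hPf t).rpow_const (p := n/(d+2*n)) (Or.inl hPpos.ne'))
  refine hprod.congr_of_eventuallyEq ?_
  filter_upwards [eventually_gt_nhds ht] with s hs
  exact hFeq d n hs


/-- The second-order partial derivative of `F` twice in `x1` at `(1/2, 3/2, 1/2)`. -/
theorem g5_hess11 (d n : ℝ) (hd : 0 < d) (hn : 0 < n) :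
    pd 0 (pd 0 (F d n)) (1/2) (3/2) (1/2) =
      -((2 : ℝ) ^ (-(n / (d + 2 * n))) * n * (7 * d + 23 * n) / (2 * (d + 2 * n))) ∧
    pd 0 (pd 0 (F d n)) (1/2) (3/2) (1/2) < 0 := by
  have hd2n : (0:ℝ) < d + 2*n := by linarith
  set A : ℝ := n / (d + 2*n) with hA
  have h16 : (1/6:ℝ) < 1/2 := by norm_num
  have hPval : Pf (1/2) = 1/2 := by norm_num [Pf]
  have hPne : Pf (1/2) ≠ 0 := by rw [hPval]; norm_num
  have h6 : 6*(1/2:ℝ) - 1 ≠ 0 := by norm_num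
  -- derivative of the first-derivative function at 1/2
  have hG1 : HasDerivAt
      (fun t => S1f d n t * Pf t ^ A + Sf d n t * (3/2 * A * Pf t ^ (A - 1)))
      ((S2f d n (1/2) * Pf (1/2) ^ A + S1f d n (1/2) * (3/2 * A * Pf (1/2) ^ (A-1)))
        + (S1f d n (1/2) * (3/2 * A * Pf (1/2) ^ (A-1))
          + Sf d n (1/2) * (3/2 * A * (3/2 * (A-1) * Pf (1/2) ^ (A-1-1))))) (1/2) := by
    have t1 := (hS1f d n (1/2) h6).mul ((hPf (1/2)).rpow_const (p := A) (Or.inl hPne))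
    have t2 := (hSf d n (1/2) h6).mul
      (((hPf (1/2)).rpow_const (Or.inl hPne) (p := A - 1)).const_mul (3/2 * A))
    exact t1.add t2
  have hev : (fun t => deriv (fun s => F d n s (3/2) (1/2)) t) =ᶠ[nhds (1/2:ℝ)]
      (fun t => S1f d n t * Pf t ^ A + Sf d n t * (3/2 * A * Pf t ^ (A - 1))) := by
    filter_upwards [eventually_gt_nhds h16] with t ht
    exact (hkey d n t ht).deriv
  have hmain : pd 0 (pd 0 (F d n)) (1/2) (3/2) (1/2) =
      -((2 : ℝ) ^ (-A) * n * (7 * d + 23 * n) / (2 * (d + 2 * n))) := by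
    show deriv (fun t => pd 0 (F d n) t (3/2) (1/2)) (1/2) = _
    have hpd : (fun t => pd 0 (F d n) t (3/2) (1/2))
        = fun t => deriv (fun s => F d n s (3/2) (1/2)) t := rfl
    rw [hpd, hev.deriv_eq, hG1.deriv]
    -- numeric values
    have hSv : Sf d n (1/2) = d/2 + n := by rw [Sf]; ring
    have hS1v : S1f d n (1/2) = -(3*n/2) := by rw [S1f]; ring
    have hS2v : S2f d n (1/2) = n := by rw [S2f]; ring
    have hE1 : ((1/2:ℝ)) ^ (A-1) = 2 * ((1/2:ℝ)) ^ A := by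
      rw [Real.rpow_sub (by norm_num : (0:ℝ) < 1/2), Real.rpow_one]; ring
    have hE2 : ((1/2:ℝ)) ^ (A-1-1) = 4 * ((1/2:ℝ)) ^ A := by
      rw [Real.rpow_sub (by norm_num : (0:ℝ) < 1/2), Real.rpow_one, hE1]; ring
    have hE3 : (2:ℝ) ^ (-A) = ((1/2:ℝ)) ^ A := by
      rw [one_div, Real.inv_rpow (by norm_num : (0:ℝ) ≤ 2), ← Real.rpow_neg (by norm_num : (0:ℝ) ≤ 2)]
    rw [hSv, hS1v, hS2v, hPval, hE1, hE2, hE3, hA]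
    have hEpos : (0:ℝ) < ((1/2:ℝ)) ^ (n/(d+2*n)) := Real.rpow_pos_of_pos (by norm_num) _
    field_simp
    ring
  refine ⟨hmain, ?_⟩
  rw [hmain, neg_lt_zero]
  have hEpos : (0:ℝ) < (2:ℝ) ^ (-A) := Real.rpow_pos_of_pos (by norm_num) _
  apply div_pos
  · apply mul_pos (mul_pos hEpos hn); linarith
  · linarith
end

section
/- The second-order partial derivative ∂²F/∂x2² at the point (1/2, 3/2, 1/2) equals 2^{−n/(d+2n)}·n·(d + n)/(2(d + 2n)); in particular it is positive, so the Einstein metric g5 = (1/2, 3/2, 1, 1/2) is unstable as a critical point of the normalized scalar curvature. -/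
open Real

lemma upow_hasDerivAt (p t : ℝ) (ht : 1/2 < t) :
    HasDerivAt (fun s : ℝ => ((2*s-1)/4) ^ p) (p * ((2*t-1)/4) ^ (p-1) * (1/2)) t := by
  have h1 : HasDerivAt (fun s : ℝ => (2*s-1)/4) (1/2) t := by
    have h := (((hasDerivAt_id t).const_mul 2).sub_const 1).div_const 4
    norm_num at h
    exact h
  have h2 : HasDerivAt (fun x : ℝ => x ^ p) (p * ((2*t-1)/4) ^ (p-1)) ((2*t-1)/4) :=
    Real.hasDerivAt_rpow_const (Or.inl (by linarith : (0:ℝ) < (2*t-1)/4).ne')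
  exact h2.comp t h1

lemma F_eq (d n : ℝ) : Set.EqOn (fun t => F d n (1/2) t (1/2))
    (fun t => ((d+n)/2) * ((2*t-1)/4) ^ (n/(d+2*n))
      + (n/4) * ((2*t-1)/4) ^ (n/(d+2*n) - 1)) (Set.Ioi (1/2:ℝ)) := by
  intro t ht
  simp only [Set.mem_Ioi] at ht
  have hu : (0:ℝ) < (2*t-1)/4 := by linarith
  have hne : (2*t-1:ℝ) ≠ 0 := by linarith
  have hS : Scal d n (1/2) t 1 (1/2) = d/2 + n/2 + n/(2*t-1) := by
    simp only [Scal]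
    rw [show (16 * 1 * ((1/2:ℝ) ^ 2 - 1/2 * t) ^ 2) = (2*t-1)^2 by ring]
    field_simp
    ring
  simp only [F, hS]
  rw [show (1/2 * t - (1/2:ℝ)^2) = (2*t-1)/4 by ring,
      Real.rpow_sub_one (ne_of_gt hu)]
  field_simp

lemma deriv_F (d n t : ℝ) (ht : 1/2 < t) :
    deriv (fun s => F d n (1/2) s (1/2)) t
      = ((d+n)/2 * (n/(d+2*n)) * (1/2)) * ((2*t-1)/4) ^ (n/(d+2*n) - 1)
      + (n/4 * (n/(d+2*n) - 1) * (1/2)) * ((2*t-1)/4) ^ (n/(d+2*n) - 1 - 1) := by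
  have hg : HasDerivAt (fun s => ((d+n)/2) * ((2*s-1)/4) ^ (n/(d+2*n))
      + (n/4) * ((2*s-1)/4) ^ (n/(d+2*n) - 1))
      (((d+n)/2) * ((n/(d+2*n)) * ((2*t-1)/4) ^ (n/(d+2*n) - 1) * (1/2))
        + (n/4) * ((n/(d+2*n) - 1) * ((2*t-1)/4) ^ (n/(d+2*n) - 1 - 1) * (1/2))) t :=
    ((upow_hasDerivAt _ t ht).const_mul _).add ((upow_hasDerivAt _ t ht).const_mul _)
  have heq : (fun s => F d n (1/2) s (1/2)) =ᶠ[nhds t]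
      (fun s => ((d+n)/2) * ((2*s-1)/4) ^ (n/(d+2*n))
        + (n/4) * ((2*s-1)/4) ^ (n/(d+2*n) - 1)) :=
    Filter.eventuallyEq_of_mem (Ioi_mem_nhds ht) (F_eq d n)
  rw [heq.deriv_eq, hg.deriv]
  ring

/-- The second-order partial derivative of `F` twice in `x2` at `(1/2, 3/2, 1/2)`;
its positivity shows that `g5` is an unstable critical point. -/
theorem g5_hess22 (d n : ℝ) (hd : 0 < d) (hn : 0 < n) :
    pd 1 (pd 1 (F d n)) (1/2) (3/2) (1/2) =
      (2 : ℝ) ^ (-(n / (d + 2 * n))) * n * (d + n) / (2 * (d + 2 * n)) ∧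
    0 < pd 1 (pd 1 (F d n)) (1/2) (3/2) (1/2) := by
  set e : ℝ := n / (d + 2 * n) with he
  have hd2n : d + 2 * n ≠ 0 := by positivity
  have key : pd 1 (pd 1 (F d n)) (1/2) (3/2) (1/2) =
      (2 : ℝ) ^ (-(n / (d + 2 * n))) * n * (d + n) / (2 * (d + 2 * n)) := by
    simp only [pd, Matrix.cons_val_one, Matrix.head_cons, Matrix.cons_val_zero]
    have hg : HasDerivAt (fun t => ((d+n)/2 * e * (1/2)) * ((2*t-1)/4) ^ (e - 1)
        + (n/4 * (e - 1) * (1/2)) * ((2*t-1)/4) ^ (e - 1 - 1))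
        (((d+n)/2 * e * (1/2)) * ((e-1) * ((2*(3/2:ℝ)-1)/4) ^ (e-1-1) * (1/2))
          + (n/4 * (e - 1) * (1/2)) * ((e-1-1) * ((2*(3/2:ℝ)-1)/4) ^ (e-1-1-1) * (1/2))) (3/2) :=
      ((upow_hasDerivAt _ (3/2) (by norm_num)).const_mul _).add
        ((upow_hasDerivAt _ (3/2) (by norm_num)).const_mul _)
    have heq : (fun t => deriv (fun s => F d n (1/2) s (1/2)) t) =ᶠ[nhds (3/2:ℝ)]
        (fun t => ((d+n)/2 * e * (1/2)) * ((2*t-1)/4) ^ (e - 1)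
          + (n/4 * (e - 1) * (1/2)) * ((2*t-1)/4) ^ (e - 1 - 1)) :=
      Filter.eventuallyEq_of_mem (Ioi_mem_nhds (by norm_num : (1/2:ℝ) < 3/2))
        (fun t ht => deriv_F d n t ht)
    rw [heq.deriv_eq, hg.deriv]
    have hh : ((2*(3/2:ℝ)-1)/4) = 1/2 := by norm_num
    rw [hh]
    have e1 : e - 1 - 1 = e - 2 := by ring
    have e2 : e - 2 - 1 = e - 3 := by ring
    rw [e1]; rw [e2]
    have h05 : (0:ℝ) < 1/2 := by norm_num
    have r2 : ((1/2:ℝ)) ^ (e - 2) = (1/2:ℝ) ^ e * 4 := by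
      rw [Real.rpow_sub h05, show (2:ℝ) = ((2:ℕ):ℝ) by norm_num, Real.rpow_natCast]
      norm_num; ring
    have r3 : ((1/2:ℝ)) ^ (e - 3) = (1/2:ℝ) ^ e * 8 := by
      rw [Real.rpow_sub h05, show (3:ℝ) = ((3:ℕ):ℝ) by norm_num, Real.rpow_natCast]
      norm_num; ring
    have r0 : (2:ℝ) ^ (-(n / (d + 2 * n))) = (1/2:ℝ) ^ e := by
      rw [← he, Real.rpow_neg (by norm_num : (0:ℝ) ≤ 2), one_div,
        Real.inv_rpow (by norm_num : (0:ℝ) ≤ 2)]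
    rw [r2, r3, r0]
    have hX : (0:ℝ) < (1/2:ℝ) ^ e := Real.rpow_pos_of_pos h05 e
    rw [he]
    field_simp
    ring
  refine ⟨key, ?_⟩
  rw [key]
  have : (0:ℝ) < (2 : ℝ) ^ (-(n / (d + 2 * n))) := Real.rpow_pos_of_pos (by norm_num) _
  positivity
end

section
/- The second-order partial derivative ∂²F/∂x4² at the point (1/2, 3/2, 1/2) equals −2·2^{−n/(d+2n)}·n²/(d + 2n); in particular it is negative. -/
open Real

/-- Auxiliary: the restriction of `F` to the `x4` line through `(1/2, 3/2)`, written
as a combination of powers of `u = 3/4 - t²`. -/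
noncomputable def Gq (A B C p t : ℝ) : ℝ :=
  A * (3/4 - t^2)^p + B * (3/4 - t^2)^(p-1) + C * (3/4 - t^2)^(p-2)

/-- First derivative of `Gq` in `t`. -/
noncomputable def Gq1 (A B C p t : ℝ) : ℝ :=
  (-(2*t)) * (A * p * (3/4 - t^2)^(p-1) + B * (p-1) * (3/4 - t^2)^(p-2)
    + C * (p-2) * (3/4 - t^2)^(p-3))

/-- Second derivative of `Gq` in `t`. -/
noncomputable def Gq2 (A B C p t : ℝ) : ℝ :=
  (-2) * (A * p * (3/4 - t^2)^(p-1) + B * (p-1) * (3/4 - t^2)^(p-2)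
      + C * (p-2) * (3/4 - t^2)^(p-3))
  + (-(2*t)) * ((-(2*t)) * (A * p * (p-1) * (3/4 - t^2)^(p-2)
      + B * (p-1) * (p-2) * (3/4 - t^2)^(p-3)
      + C * (p-2) * (p-3) * (3/4 - t^2)^(p-4)))

lemma hasDerivAt_neg_sq (t : ℝ) : HasDerivAt (fun s : ℝ => 3/4 - s^2) (-(2*t)) t := by
  have h := ((hasDerivAt_pow 2 t).const_sub (3/4 : ℝ))
  refine h.congr_deriv ?_
  simp

lemma hasDerivAt_u_rpow (t q : ℝ) (ht : t^2 < 3/4) :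
    HasDerivAt (fun s : ℝ => (3/4 - s^2)^q) ((-(2*t)) * q * (3/4 - t^2)^(q-1)) t :=
  (hasDerivAt_neg_sq t).rpow_const (Or.inl (by nlinarith))

lemma hasDerivAt_Gq (A B C p t : ℝ) (ht : t^2 < 3/4) :
    HasDerivAt (Gq A B C p) (Gq1 A B C p t) t := by
  have h1 := (hasDerivAt_u_rpow t p ht).const_mul A
  have h2 := (hasDerivAt_u_rpow t (p-1) ht).const_mul B
  have h3 := (hasDerivAt_u_rpow t (p-2) ht).const_mul C
  have := (h1.add h2).add h3
  refine this.congr_deriv ?_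
  unfold Gq1
  rw [show p - 1 - 1 = p - 2 by ring, show p - 2 - 1 = p - 3 by ring]
  ring

lemma hasDerivAt_Gq1 (A B C p t : ℝ) (ht : t^2 < 3/4) :
    HasDerivAt (Gq1 A B C p) (Gq2 A B C p t) t := by
  have h1 := ((hasDerivAt_u_rpow t (p-1) ht).const_mul (A * p))
  have h2 := ((hasDerivAt_u_rpow t (p-2) ht).const_mul (B * (p-1)))
  have h3 := ((hasDerivAt_u_rpow t (p-3) ht).const_mul (C * (p-2)))
  have hh := (h1.add h2).add h3
  have hlin : HasDerivAt (fun s : ℝ => -(2*s)) (-2) t := by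
    exact ((hasDerivAt_id t).const_mul (2:ℝ)).neg.congr_deriv (by norm_num)
  have := hlin.mul hh
  refine this.congr_deriv ?_
  unfold Gq2
  simp only [Pi.add_apply]
  rw [show p - 1 - 1 = p - 2 by ring, show p - 2 - 1 = p - 3 by ring,
    show p - 3 - 1 = p - 4 by ring]
  ring

lemma F_eq_Gq (d n t : ℝ) (ht : t^2 < 3/4) :
    F d n (1/2) (3/2) t = Gq (d/2 + n/4) (n/2) (-(n/16)) (n/(d+2*n)) t := by
  have hu : (0:ℝ) < 3/4 - t^2 := by linarith
  have hne : (3/4 - t^2 : ℝ) ≠ 0 := hu.ne'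
  have hne2 : (t^2 - 3/4 : ℝ) ≠ 0 := by intro h; apply hne; linarith
  unfold F Scal Gq
  set p := n/(d+2*n) with hp
  have e1 : (3/4 - t^2:ℝ)^(p-1) = (3/4 - t^2)^p / (3/4 - t^2) := by
    rw [Real.rpow_sub hu, Real.rpow_one]
  have e2 : (3/4 - t^2:ℝ)^(p-2) = (3/4 - t^2)^p / ((3/4 - t^2) * (3/4 - t^2)) := by
    rw [show p - 2 = p - 1 - 1 by ring, Real.rpow_sub hu, Real.rpow_one, e1, div_div]
  rw [e2, e1, show (1:ℝ)/2 * (3/2) = 3/4 by norm_num]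
  set X := (3/4 - t^2:ℝ)^p with hX
  have h4 : (t ^ 2 * 4 - 3 : ℝ) ≠ 0 := by intro h; apply hne; linarith
  have h5 : (3 - 4 * t ^ 2 : ℝ) ≠ 0 := by intro h; apply hne; linarith
  have h6 : (4 * t ^ 2 - 3 : ℝ) ≠ 0 := by intro h; apply hne; linarith
  field_simp [h4, h5, h6]
  ring

/-- The second-order partial derivative of `F` twice in `x4` at `(1/2, 3/2, 1/2)`. -/
theorem g5_hess33 (d n : ℝ) (hd : 0 < d) (hn : 0 < n) :
    pd 2 (pd 2 (F d n)) (1/2) (3/2) (1/2) =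
      -(2 * (2 : ℝ) ^ (-(n / (d + 2 * n))) * n ^ 2 / (d + 2 * n)) ∧
    pd 2 (pd 2 (F d n)) (1/2) (3/2) (1/2) < 0 := by
  have hq : (0:ℝ) < d + 2 * n := by linarith
  set p := n / (d + 2 * n) with hp
  set A := d/2 + n/4 with hA
  set B := n/2 with hB
  set C := -(n/16) with hC
  have hmem : ∀ t ∈ Set.Ioo (0:ℝ) (4/5), t^2 < 3/4 := by
    intro t ht
    nlinarith [ht.1, ht.2]
  have hd1 : ∀ t ∈ Set.Ioo (0:ℝ) (4/5),
      deriv (fun s => F d n (1/2) (3/2) s) t = Gq1 A B C p t := by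
    intro t ht
    have hev : (fun s => F d n (1/2) (3/2) s) =ᶠ[nhds t] Gq A B C p := by
      filter_upwards [Ioo_mem_nhds ht.1 ht.2] with s hs
      exact F_eq_Gq d n s (hmem s hs)
    rw [hev.deriv_eq, (hasDerivAt_Gq A B C p t (hmem t ht)).deriv]
  have hpd : pd 2 (pd 2 (F d n)) (1/2) (3/2) (1/2) =
      deriv (fun t => deriv (fun s => F d n (1/2) (3/2) s) t) (1/2) := rfl
  have hev2 : (fun t => deriv (fun s => F d n (1/2) (3/2) s) t)
      =ᶠ[nhds (1/2 : ℝ)] Gq1 A B C p := by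
    filter_upwards [Ioo_mem_nhds (by norm_num : (0:ℝ) < 1/2) (by norm_num : (1/2:ℝ) < 4/5)]
      with t ht
    exact hd1 t ht
  have h12 : ((1:ℝ)/2)^2 < 3/4 := by norm_num
  have key : pd 2 (pd 2 (F d n)) (1/2) (3/2) (1/2) = Gq2 A B C p (1/2) := by
    rw [hpd, hev2.deriv_eq, (hasDerivAt_Gq1 A B C p (1/2) h12).deriv]
  have hpow : ∀ k : ℝ, ((3:ℝ)/4 - (1/2)^2)^(p - k) = 2^(-p) * 2^k := by
    intro k
    rw [show ((3:ℝ)/4 - (1/2)^2) = (2:ℝ)^(-1:ℝ) by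
        rw [Real.rpow_neg_one]; norm_num,
      ← Real.rpow_mul (by norm_num : (0:ℝ) ≤ 2),
      show (-1:ℝ) * (p - k) = -p + k by ring,
      Real.rpow_add (by norm_num : (0:ℝ) < 2)]
  have h2r1 : (2:ℝ)^(1:ℝ) = 2 := Real.rpow_one 2
  have h2r2 : (2:ℝ)^(2:ℝ) = 4 := by
    rw [show (2:ℝ) = ((2:ℕ):ℝ) by norm_num, Real.rpow_natCast]; norm_num
  have h2r3 : (2:ℝ)^(3:ℝ) = 8 := by
    rw [show (3:ℝ) = ((3:ℕ):ℝ) by norm_num, Real.rpow_natCast]; norm_num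
  have h2r4 : (2:ℝ)^(4:ℝ) = 16 := by
    rw [show (4:ℝ) = ((4:ℕ):ℝ) by norm_num, Real.rpow_natCast]; norm_num
  have hval : Gq2 A B C p (1/2) = -(2 * (2:ℝ)^(-p) * n^2 / (d + 2*n)) := by
    unfold Gq2
    rw [hpow 1, hpow 2, hpow 3, hpow 4, h2r1, h2r2, h2r3, h2r4]
    set c := (2:ℝ)^(-p) with hc
    rw [hA, hB, hC, hp]
    field_simp
    ring
  have keyval : pd 2 (pd 2 (F d n)) (1/2) (3/2) (1/2) =
      -(2 * (2:ℝ)^(-(n / (d + 2*n))) * n^2 / (d + 2*n)) := by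
    rw [key, hval]
  refine ⟨keyval, ?_⟩
  rw [keyval]
  have hpos : (0:ℝ) < 2 * (2:ℝ)^(-(n / (d + 2*n))) * n^2 / (d + 2*n) := by positivity
  linarith
end

section
/- The mixed second-order partial derivative ∂²F/∂x1∂x2 at the point (1/2, 3/2, 1/2) equals −2^{−n/(d+2n)}·n·(n − d)/(2(d + 2n)), and the mixed second-order partial derivative ∂²F/∂x1∂x4 at (1/2, 3/2, 1/2) equals 2^{−n/(d+2n)}·n·(d + 5n)/(d + 2n). -/
open Real

section Aux

open Filter Topology

lemma hasDerivAt_poly1 (a b x : ℝ) :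
    HasDerivAt (fun s : ℝ => a*s + b) a x := by
  simpa using ((hasDerivAt_id x).const_mul a).add_const b

lemma hasDerivAt_poly2 (a2 a1 a0 x : ℝ) :
    HasDerivAt (fun s : ℝ => a2*s^2 + a1*s + a0) (2*a2*x + a1) x := by
  have h2 : HasDerivAt (fun s : ℝ => s^2) (2*x) x := by simpa using hasDerivAt_pow 2 x
  have := ((h2.const_mul a2).add ((hasDerivAt_id x).const_mul a1)).add_const a0
  simp only [Pi.add_def, id_eq] at this
  refine this.congr_deriv ?_
  ring

lemma hasDerivAt_poly4 (a4 a2 a0 x : ℝ) :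
    HasDerivAt (fun s : ℝ => a4*s^4 + a2*s^2 + a0) (4*a4*x^3 + 2*a2*x) x := by
  have h4 : HasDerivAt (fun s : ℝ => s^4) (4*x^3) x := by simpa using hasDerivAt_pow 4 x
  have h2 : HasDerivAt (fun s : ℝ => s^2) (2*x) x := by simpa using hasDerivAt_pow 2 x
  have := ((h4.const_mul a4).add (h2.const_mul a2)).add_const a0
  simp only [Pi.add_def] at this
  refine this.congr_deriv ?_
  ring

lemma hasDerivAt_rpowP (a b c x : ℝ) (h : 0 < a*x - b) :
    HasDerivAt (fun s : ℝ => (a*s - b)^c) (c * (a*x - b)^(c-1) * a) x := by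
  have h1 : HasDerivAt (fun s : ℝ => a*s - b) a x := by
    simpa using ((hasDerivAt_id x).const_mul a).sub_const b
  have h2 := Real.hasDerivAt_rpow_const (x := a*x - b) (p := c) (Or.inl h.ne')
  simpa [mul_assoc, Function.comp_def] using h2.comp x h1

lemma hasDerivAt_rpowQ (a c x : ℝ) (h : 0 < a - x^2) :
    HasDerivAt (fun s : ℝ => (a - s^2)^c) (c * (a - x^2)^(c-1) * (-(2*x))) x := by
  have h1 : HasDerivAt (fun s : ℝ => a - s^2) (-(2*x)) x := by
    have h2 : HasDerivAt (fun s : ℝ => s^2) (2*x) x := by simpa using hasDerivAt_pow 2 x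
    simpa using h2.const_sub a
  have h2 := Real.hasDerivAt_rpow_const (x := a - x^2) (p := c) (Or.inl h.ne')
  simpa [mul_assoc, Function.comp_def] using h2.comp x h1

lemma half_rpow (e k c : ℝ) (h : (2:ℝ)^k = c) : (1/2:ℝ)^(e-k) = c * 2^(-e) := by
  rw [show (1/2:ℝ) = 2⁻¹ by norm_num,
    Real.inv_rpow (by norm_num : (0:ℝ) ≤ 2),
    ← Real.rpow_neg (by norm_num : (0:ℝ) ≤ 2),
    show -(e-k) = k + -e by ring,
    Real.rpow_add (by norm_num : (0:ℝ) < 2), h]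

lemma F_eq_s6 (d n x1 x2 x4 : ℝ) (h : x4^2 < x1*x2) :
    F d n x1 x2 x4 =
      d/2 * (x1*x2 - x4^2) ^ (n/(d+2*n)) -
      n/16 * (x2^2 + x1^2*(4*x2^2 - 8*x2 + 1) + 8*x2*x4^2 + 8*x1*(x4^2 - x2^2)
          - 2*x4^2*(1 + 2*x4^2)) * (x1*x2 - x4^2) ^ (n/(d+2*n) - 2) := by
  have hP : (0:ℝ) < x1*x2 - x4^2 := by linarith
  have hr : (x1*x2 - x4^2) ^ (n/(d+2*n) - 2) =
      (x1*x2 - x4^2) ^ (n/(d+2*n)) / (x1*x2 - x4^2)^2 := by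
    rw [Real.rpow_sub hP, Real.rpow_two]
  have h2 : (x4^2 - x1*x2)^2 = (x1*x2 - x4^2)^2 := by ring
  unfold F Scal
  rw [hr, h2]
  have hne : (x1*x2 - x4^2) ≠ 0 := hP.ne'
  field_simp

lemma derivF2 (d n t : ℝ) (ht : (1:ℝ)/6 < t) :
    deriv (fun s => F d n t s (1/2)) (3/2) =
      d/2 * ((n/(d+2*n)) * (3/2*t - 1/4)^((n/(d+2*n))-1) * t)
      - n/16 * ((4*t^2 + -24*t + 5) * (3/2*t - 1/4)^((n/(d+2*n))-2)
        + (-2*t^2 + -16*t + 9/2) * (((n/(d+2*n))-2) * (3/2*t - 1/4)^((n/(d+2*n))-3) * t)) := by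
  set e := n/(d+2*n) with he
  have hP : (0:ℝ) < t*(3/2) - 1/4 := by linarith
  have hev : (fun s => F d n t s (1/2)) =ᶠ[𝓝 (3/2)]
      (fun s => d/2 * (t*s - 1/4)^e
        - n/16 * ((1+4*t^2-8*t)*s^2 + (2-8*t^2)*s + (t^2+2*t-3/4)) * (t*s - 1/4)^(e-2)) := by
    have hopen : IsOpen {s : ℝ | (1/4:ℝ) < t * s} :=
      isOpen_lt continuous_const (continuous_const.mul continuous_id)
    filter_upwards [hopen.mem_nhds (by simpa using hP : (3/2:ℝ) ∈ {s : ℝ | (1/4:ℝ) < t * s})] with s hs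
    have hs' : ((1/2:ℝ))^2 < t*s := by
      rw [show ((1/2:ℝ))^2 = 1/4 by norm_num]; exact hs
    rw [F_eq_s6 d n t s (1/2) hs', show t*s - ((1/2:ℝ))^2 = t*s - 1/4 by norm_num, ← he]
    ring
  rw [hev.deriv_eq]
  have hQ := hasDerivAt_poly2 (1+4*t^2-8*t) (2-8*t^2) (t^2+2*t-3/4) (3/2)
  have hR1 := hasDerivAt_rpowP t (1/4) e (3/2) hP
  have hR2 := hasDerivAt_rpowP t (1/4) (e-2) (3/2) hP
  have H := (hR1.const_mul (d/2)).sub ((hQ.const_mul (n/16)).mul hR2)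
  simp only [Pi.sub_def, Pi.mul_def, Pi.add_def] at H
  rw [H.deriv, show t*(3/2) - (1/4:ℝ) = 3/2*t - 1/4 by ring,
    show e-2-1 = e-3 by ring]
  ring

lemma derivF4 (d n t : ℝ) (ht : (1:ℝ)/6 < t) :
    deriv (fun u => F d n t (3/2) u) (1/2) =
      d/2 * ((n/(d+2*n)) * (3/2*t - 1/4)^((n/(d+2*n))-1) * (-1))
      - n/16 * ((8*t + 8) * (3/2*t - 1/4)^((n/(d+2*n))-2)
        + (-2*t^2 + -16*t + 9/2) * (((n/(d+2*n))-2) * (3/2*t - 1/4)^((n/(d+2*n))-3) * (-1))) := by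
  set e := n/(d+2*n) with he
  have hP : (0:ℝ) < t*(3/2) - (1/2)^2 := by
    rw [show ((1/2:ℝ))^2 = 1/4 by norm_num]; linarith
  have hev : (fun u => F d n t (3/2) u) =ᶠ[𝓝 (1/2)]
      (fun u => d/2 * (t*(3/2) - u^2)^e
        - n/16 * ((-4)*u^4 + (10+8*t)*u^2 + (9/4 - 2*t^2 - 18*t)) * (t*(3/2) - u^2)^(e-2)) := by
    have hopen : IsOpen {u : ℝ | u^2 < t * (3/2)} :=
      isOpen_lt (by continuity) continuous_const
    filter_upwards [hopen.mem_nhds (by simpa using hP : (1/2:ℝ) ∈ {u : ℝ | u^2 < t * (3/2)})] with u hu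
    rw [F_eq_s6 d n t (3/2) u hu, ← he]
    ring
  rw [hev.deriv_eq]
  have hQ := hasDerivAt_poly4 (-4) (10+8*t) (9/4 - 2*t^2 - 18*t) (1/2)
  have hR1 := hasDerivAt_rpowQ (t*(3/2)) e (1/2) hP
  have hR2 := hasDerivAt_rpowQ (t*(3/2)) (e-2) (1/2) hP
  have H := (hR1.const_mul (d/2)).sub ((hQ.const_mul (n/16)).mul hR2)
  simp only [Pi.sub_def, Pi.mul_def, Pi.add_def] at H
  rw [H.deriv, show t*(3/2) - ((1/2:ℝ))^2 = 3/2*t - 1/4 by ring,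
    show e-2-1 = e-3 by ring]
  ring

lemma branch1 (d n : ℝ) (hd : 0 < d) (hn : 0 < n) :
    deriv (fun t => deriv (fun s => F d n t s (1/2)) (3/2)) (1/2)
      = -((2:ℝ) ^ (-(n / (d + 2 * n))) * n * (n - d) / (2 * (d + 2 * n))) := by
  set e := n/(d+2*n) with he
  have hev : (fun t => deriv (fun s => F d n t s (1/2)) (3/2)) =ᶠ[𝓝 (1/2)]
      (fun t => d/2 * (e * (3/2*t - 1/4)^(e-1) * t)
        - n/16 * ((4*t^2 + -24*t + 5) * (3/2*t - 1/4)^(e-2)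
          + (-2*t^2 + -16*t + 9/2) * ((e-2) * (3/2*t - 1/4)^(e-3) * t))) := by
    filter_upwards [isOpen_Ioi.mem_nhds (show (1/6:ℝ) < 1/2 by norm_num)] with t ht
    exact derivF2 d n t ht
  rw [hev.deriv_eq]
  have hL : (0:ℝ) < 3/2*(1/2) - 1/4 := by norm_num
  have hB1 := hasDerivAt_rpowP (3/2) (1/4) (e-1) (1/2) hL
  have hB2 := hasDerivAt_rpowP (3/2) (1/4) (e-2) (1/2) hL
  have hB3 := hasDerivAt_rpowP (3/2) (1/4) (e-3) (1/2) hL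
  have hq1 := hasDerivAt_poly2 4 (-24) 5 (1/2)
  have hq2 := hasDerivAt_poly2 (-2) (-16) (9/2) (1/2)
  have hid : HasDerivAt (fun t : ℝ => t) 1 (1/2) := hasDerivAt_id _
  have H := (((hB1.const_mul e).mul hid).const_mul (d/2)).sub
    (((hq1.mul hB2).add (hq2.mul ((hB3.const_mul (e-2)).mul hid))).const_mul (n/16))
  simp only [Pi.sub_def, Pi.mul_def, Pi.add_def] at H
  rw [H.deriv, show (3/2*(1/2:ℝ) - 1/4) = 1/2 by norm_num,
    show e-1-1 = e-2 by ring, show e-2-1 = e-3 by ring, show e-3-1 = e-4 by ring]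
  simp only [half_rpow e 1 2 (by norm_num), half_rpow e 2 4 (by norm_num),
    half_rpow e 3 8 (by norm_num), half_rpow e 4 16 (by norm_num)]
  have hden : d + 2*n ≠ 0 := by positivity
  rw [he]
  field_simp
  ring

lemma branch2 (d n : ℝ) (hd : 0 < d) (hn : 0 < n) :
    deriv (fun t => deriv (fun u => F d n t (3/2) u) (1/2)) (1/2)
      = (2:ℝ) ^ (-(n / (d + 2 * n))) * n * (d + 5 * n) / (d + 2 * n) := by
  set e := n/(d+2*n) with he
  have hev : (fun t => deriv (fun u => F d n t (3/2) u) (1/2)) =ᶠ[𝓝 (1/2)]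
      (fun t => d/2 * (e * (3/2*t - 1/4)^(e-1) * (-1))
        - n/16 * ((8*t + 8) * (3/2*t - 1/4)^(e-2)
          + (-2*t^2 + -16*t + 9/2) * ((e-2) * (3/2*t - 1/4)^(e-3) * (-1)))) := by
    filter_upwards [isOpen_Ioi.mem_nhds (show (1/6:ℝ) < 1/2 by norm_num)] with t ht
    exact derivF4 d n t ht
  rw [hev.deriv_eq]
  have hL : (0:ℝ) < 3/2*(1/2) - 1/4 := by norm_num
  have hB1 := hasDerivAt_rpowP (3/2) (1/4) (e-1) (1/2) hL
  have hB2 := hasDerivAt_rpowP (3/2) (1/4) (e-2) (1/2) hL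
  have hB3 := hasDerivAt_rpowP (3/2) (1/4) (e-3) (1/2) hL
  have hq2 := hasDerivAt_poly2 (-2) (-16) (9/2) (1/2)
  have hl1 := hasDerivAt_poly1 8 8 (1/2)
  have H := (((hB1.const_mul e).mul_const (-1)).const_mul (d/2)).sub
    (((hl1.mul hB2).add (hq2.mul ((hB3.const_mul (e-2)).mul_const (-1)))).const_mul (n/16))
  simp only [Pi.sub_def, Pi.mul_def, Pi.add_def] at H
  rw [H.deriv, show (3/2*(1/2:ℝ) - 1/4) = 1/2 by norm_num,
    show e-1-1 = e-2 by ring, show e-2-1 = e-3 by ring, show e-3-1 = e-4 by ring]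
  simp only [half_rpow e 1 2 (by norm_num), half_rpow e 2 4 (by norm_num),
    half_rpow e 3 8 (by norm_num), half_rpow e 4 16 (by norm_num)]
  have hden : d + 2*n ≠ 0 := by positivity
  rw [he]
  field_simp
  ring

end Aux

/-- The mixed second-order partial derivatives of `F` in `(x1, x2)` and in `(x1, x4)`
at `(1/2, 3/2, 1/2)`. -/
theorem g5_hess_mixed (d n : ℝ) (hd : 0 < d) (hn : 0 < n) :
    pd 0 (pd 1 (F d n)) (1/2) (3/2) (1/2) =
      -((2 : ℝ) ^ (-(n / (d + 2 * n))) * n * (n - d) / (2 * (d + 2 * n))) ∧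
    pd 0 (pd 2 (F d n)) (1/2) (3/2) (1/2) =
      (2 : ℝ) ^ (-(n / (d + 2 * n))) * n * (d + 5 * n) / (d + 2 * n) := by
  constructor
  · have h := branch1 d n hd hn
    simpa [pd] using h
  · have h := branch2 d n hd hn
    simpa [pd] using h
end

section
/- Let a be a real number with 1/2 < a < 1, let d > 0, set n = 2d(1−a), and let y₊ = (1/2)·√((2a−1)/(2−a)). Then all three first-order partial derivatives of F vanish at the point (x1,x2,x4) = (1, 1, y₊); that is, (1, 1, y₊) is a critical point of the normalized scalar curvature F (corresponding to the non-diagonal Einstein metric g3 = (1,1,1,y₊)). -/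
open Real

set_option maxHeartbeats 1000000 in
/-- `(1, 1, y₊)` is a critical point of the normalized scalar curvature `F`
(corresponding to the non-diagonal Einstein metric `g3 = (1, 1, 1, y₊)`). -/
theorem g3_critical (a d n y : ℝ) (ha1 : 1/2 < a) (ha2 : a < 1) (hd : 0 < d)
    (hn : n = 2 * d * (1 - a))
    (hy : y = (1/2) * Real.sqrt ((2 * a - 1) / (2 - a))) :
    ∀ i : Fin 3, pd i (F d n) 1 1 y = 0 := by
  have h2a : (0:ℝ) < 2 - a := by linarith
  have hy2 : y ^ 2 = (2 * a - 1) / (4 * (2 - a)) := by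
    rw [hy, mul_pow, Real.sq_sqrt (div_nonneg (by linarith) h2a.le),
      show ((1:ℝ)/2)^2 = 1/4 by norm_num, div_mul_div_comm, one_mul]
  have hq : (0:ℝ) < 1 - y ^ 2 := by
    have h1 : (2 * a - 1) / (4 * (2 - a)) < 1 := by
      rw [div_lt_one (by linarith)]; linarith
    rw [sub_pos, hy2]; exact h1
  have hqne : (1:ℝ) - y ^ 2 ≠ 0 := hq.ne'
  have hq1ne : y ^ 2 - 1 ≠ 0 := by intro h; rw [sub_eq_zero] at h; rw [h] at hq; linarith
  have hq16 : 16 * ((y:ℝ) ^ 2 - 1) ^ 2 ≠ 0 := mul_ne_zero (by norm_num) (pow_ne_zero 2 hq1ne)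
  have h2a' : (2:ℝ) - a ≠ 0 := ne_of_gt h2a
  have h3a : (3:ℝ) - 2 * a ≠ 0 := ne_of_gt (by linarith)
  have hd' : d ≠ 0 := ne_of_gt hd
  have hdd : d + 2 * (2 * d * (1 - a)) ≠ 0 := ne_of_gt (by nlinarith)
  have hy4 : y ^ 4 = ((2 * a - 1) / (4 * (2 - a))) ^ 2 := by
    rw [show (y:ℝ) ^ 4 = (y ^ 2) ^ 2 by ring, hy2]
  have hsplit : ((1:ℝ) - y ^ 2) ^ (n / (d + 2 * n))
      = (1 - y ^ 2) ^ (n / (d + 2 * n) - 1) * (1 - y ^ 2) := by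
    nth_rewrite 1 [show n / (d + 2 * n) = (n / (d + 2 * n) - 1) + 1 by ring]
    rw [Real.rpow_add hq, Real.rpow_one]
  have hdn2 : d + 2 * n ≠ 0 := by rw [hn]; exact hdd
  have hkey0 : -3 * d - 3 * n + (4 * d + 2 * n) * (1 - y ^ 2) = 0 := by
    rw [hy2, hn]; field_simp; ring
  have keyf : (-3 * n / (8 * (1 - y ^ 2) ^ 2)) * (1 - y ^ 2)
      + (d / 2 + n * (3 + 2 * (1 - y ^ 2)) / (8 * (1 - y ^ 2))) * (n / (d + 2 * n)) = 0 := by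
    field_simp
    have h' : d + n * 2 ≠ 0 := by rw [mul_comm]; exact hdn2
    rw [add_div' _ _ _ h', mul_div_assoc', div_eq_iff h']
    linear_combination (2 * n) * hkey0
  have keyf3 : (3 * n * y / (4 * (1 - y ^ 2) ^ 2)) * (1 - y ^ 2)
      + (d / 2 + n * (3 + 2 * (1 - y ^ 2)) / (8 * (1 - y ^ 2))) * (-2 * y * (n / (d + 2 * n))) = 0 := by
    have hQ : ∀ Q : ℝ, Q ≠ 0 → (3 * n * y / (4 * Q ^ 2)) * Q
        = -2 * y * ((-3 * n / (8 * Q ^ 2)) * Q) := by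
      intro Q h
      field_simp
      ring
    rw [hQ _ hqne]
    linear_combination (-2 * y) * keyf
  -- the common (x1/x2) radial function
  have hS1 : HasDerivAt
      (fun t : ℝ => d / 2 - n * (((1 + 6 * y ^ 2 - 4 * y ^ 4) + (8 * y ^ 2 - 8) * t + (-3) * t ^ 2)
        / (16 * (y ^ 2 - t) ^ 2))) (-3 * n / (8 * (1 - y ^ 2) ^ 2)) 1 := by
    have hN1 : HasDerivAt (fun t : ℝ => (1 + 6 * y ^ 2 - 4 * y ^ 4) + (8 * y ^ 2 - 8) * t + (-3) * t ^ 2)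
        ((8 * y ^ 2 - 8) + (-6)) 1 := by
      have h1 : HasDerivAt (fun t : ℝ => (8 * y ^ 2 - 8) * t) (8 * y ^ 2 - 8) 1 := by
        simpa using (hasDerivAt_id (1:ℝ)).const_mul (8 * y ^ 2 - 8)
      have h2 : HasDerivAt (fun t : ℝ => (-3:ℝ) * t ^ 2) (-6:ℝ) 1 := by
        have h := (hasDerivAt_pow 2 (1:ℝ)).const_mul (-3:ℝ)
        refine HasDerivAt.congr_deriv h (Eq.symm ?_)
        try norm_num
        try ring
      exact (h1.const_add _).add h2
    have hD1 : HasDerivAt (fun t : ℝ => 16 * (y ^ 2 - t) ^ 2) (-32 * (y ^ 2 - 1)) 1 := by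
      have h := (((hasDerivAt_id (1:ℝ)).const_sub (y ^ 2)).pow 2).const_mul (16:ℝ)
      refine HasDerivAt.congr_deriv h (Eq.symm ?_)
      try norm_num
          try ring
    have h := ((hN1.div hD1 (by simpa using hq16)).const_mul n).const_sub (d / 2)
    refine HasDerivAt.congr_deriv h (Eq.symm ?_)
    field_simp
    ring
  have hr1 : HasDerivAt (fun t : ℝ => (t - y ^ 2) ^ (n / (d + 2 * n)))
      ((n / (d + 2 * n)) * (1 - y ^ 2) ^ (n / (d + 2 * n) - 1)) 1 := by
    have h := ((hasDerivAt_id (1:ℝ)).sub_const (y ^ 2)).rpow_const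
      (p := n / (d + 2 * n)) (Or.inl (by simpa using hqne))
    refine HasDerivAt.congr_deriv h (Eq.symm ?_)
    simp
  have HG1 : HasDerivAt (fun t : ℝ =>
      (d / 2 - n * (((1 + 6 * y ^ 2 - 4 * y ^ 4) + (8 * y ^ 2 - 8) * t + (-3) * t ^ 2)
        / (16 * (y ^ 2 - t) ^ 2))) * (t - y ^ 2) ^ (n / (d + 2 * n))) 0 1 := by
    have hSval : d / 2 - n * ((1 + 6 * y ^ 2 - 4 * y ^ 4 + (8 * y ^ 2 - 8) * 1 + -3 * 1 ^ 2)
        / (16 * (y ^ 2 - 1) ^ 2)) = d / 2 + n * (3 + 2 * (1 - y ^ 2)) / (8 * (1 - y ^ 2)) := by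
      field_simp
      ring
    have h := hS1.mul hr1
    refine HasDerivAt.congr_deriv h (Eq.symm ?_)
    show (0:ℝ) = _
    rw [hsplit, hSval]
    linear_combination (-((1 - y ^ 2) ^ (n / (d + 2 * n) - 1))) * keyf
  -- the x4 radial function
  have hS3 : HasDerivAt
      (fun u : ℝ => d / 2 - n * ((-10 + 14 * u ^ 2 - 4 * u ^ 4) / (16 * (u ^ 2 - 1) ^ 2)))
      (3 * n * y / (4 * (1 - y ^ 2) ^ 2)) y := by
    have hN3 : HasDerivAt (fun u : ℝ => -10 + 14 * u ^ 2 - 4 * u ^ 4) (28 * y - 16 * y ^ 3) y := by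
      have h1 : HasDerivAt (fun u : ℝ => (14:ℝ) * u ^ 2) (28 * y) y := by
        have h := (hasDerivAt_pow 2 y).const_mul (14:ℝ)
        refine HasDerivAt.congr_deriv h (Eq.symm ?_)
        norm_num
        ring
      have h2 : HasDerivAt (fun u : ℝ => (4:ℝ) * u ^ 4) (16 * y ^ 3) y := by
        have h := (hasDerivAt_pow 4 y).const_mul (4:ℝ)
        refine HasDerivAt.congr_deriv h (Eq.symm ?_)
        norm_num
        ring
      exact (h1.const_add (-10)).sub h2
    have hD3 : HasDerivAt (fun u : ℝ => 16 * (u ^ 2 - 1) ^ 2) (64 * (y ^ 2 - 1) * y) y := by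
      have h := (((hasDerivAt_pow 2 y).sub_const 1).pow 2).const_mul (16:ℝ)
      refine HasDerivAt.congr_deriv h (Eq.symm ?_)
      try norm_num
          try ring
    have h := ((hN3.div hD3 (by simpa using hq16)).const_mul n).const_sub (d / 2)
    refine HasDerivAt.congr_deriv h (Eq.symm ?_)
    field_simp
    ring
  have hr3 : HasDerivAt (fun u : ℝ => (1 - u ^ 2) ^ (n / (d + 2 * n)))
      (-2 * y * (n / (d + 2 * n)) * (1 - y ^ 2) ^ (n / (d + 2 * n) - 1)) y := by
    have h := ((hasDerivAt_pow 2 y).const_sub 1).rpow_const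
      (p := n / (d + 2 * n)) (Or.inl (by simpa using hqne))
    refine HasDerivAt.congr_deriv h (Eq.symm ?_)
    try norm_num
        try ring
  have HG3 : HasDerivAt (fun u : ℝ =>
      (d / 2 - n * ((-10 + 14 * u ^ 2 - 4 * u ^ 4) / (16 * (u ^ 2 - 1) ^ 2)))
        * (1 - u ^ 2) ^ (n / (d + 2 * n))) 0 y := by
    have hSval3 : d / 2 - n * ((-10 + 14 * y ^ 2 - 4 * y ^ 4) / (16 * (y ^ 2 - 1) ^ 2))
        = d / 2 + n * (3 + 2 * (1 - y ^ 2)) / (8 * (1 - y ^ 2)) := by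
      field_simp
      ring
    have h := hS3.mul hr3
    refine HasDerivAt.congr_deriv h (Eq.symm ?_)
    show (0:ℝ) = _
    rw [hsplit, hSval3]
    linear_combination (-((1 - y ^ 2) ^ (n / (d + 2 * n) - 1))) * keyf3
  -- rewrite F along each axis
  have hF1 : (fun t : ℝ => F d n t 1 y) = (fun t : ℝ =>
      (d / 2 - n * (((1 + 6 * y ^ 2 - 4 * y ^ 4) + (8 * y ^ 2 - 8) * t + (-3) * t ^ 2)
        / (16 * (y ^ 2 - t) ^ 2))) * (t - y ^ 2) ^ (n / (d + 2 * n))) := by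
    funext t
    simp only [F, Scal, one_pow, mul_one]
    ring_nf
  have hF2 : (fun t : ℝ => F d n 1 t y) = (fun t : ℝ =>
      (d / 2 - n * (((1 + 6 * y ^ 2 - 4 * y ^ 4) + (8 * y ^ 2 - 8) * t + (-3) * t ^ 2)
        / (16 * (y ^ 2 - t) ^ 2))) * (t - y ^ 2) ^ (n / (d + 2 * n))) := by
    funext t
    simp only [F, Scal, one_pow, mul_one, one_mul]
    ring_nf
  have hF3 : (fun u : ℝ => F d n 1 1 u) = (fun u : ℝ =>
      (d / 2 - n * ((-10 + 14 * u ^ 2 - 4 * u ^ 4) / (16 * (u ^ 2 - 1) ^ 2)))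
        * (1 - u ^ 2) ^ (n / (d + 2 * n))) := by
    funext u
    simp only [F, Scal, one_pow, mul_one, one_mul]
    ring_nf
  intro i
  fin_cases i
  · show pd 0 (F d n) 1 1 y = 0
    simp only [pd, Matrix.cons_val_zero]
    rw [hF1]
    exact HG1.deriv
  · show pd 1 (F d n) 1 1 y = 0
    simp only [pd, Matrix.cons_val_one, Matrix.head_cons, Matrix.cons_val_zero]
    rw [hF2]
    exact HG1.deriv
  · show pd 2 (F d n) 1 1 y = 0
    simp only [pd, Matrix.cons_val_two, Matrix.head_cons, Matrix.tail_cons]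
    rw [hF3]
    exact HG3.deriv
end

section
/- Let a be a real number with 1/2 < a < 1, let d > 0, set n = 2d(1−a) and y₊ = (1/2)·√((2a−1)/(2−a)). Then the normalized scalar curvature at the Einstein metric g3 satisfies F(1, 1, y₊) = (3(2n+d)/8)·(4(2−a)/(3(3−2a)))^{α}, where α = (n+d)/(2n+d). -/
open Real

/-- The value of the normalized scalar curvature at the Einstein metric `g3`. -/
theorem g3_scalN (a d n y α : ℝ) (ha1 : 1/2 < a) (ha2 : a < 1) (hd : 0 < d)
    (hn : n = 2 * d * (1 - a))
    (hy : y = (1/2) * Real.sqrt ((2 * a - 1) / (2 - a)))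
    (hα : α = (n + d) / (2 * n + d)) :
    F d n 1 1 y = (3 * (2 * n + d) / 8) * (4 * (2 - a) / (3 * (3 - 2 * a))) ^ α := by
  have h2a : (0:ℝ) < 2 - a := by linarith
  have h3a : (0:ℝ) < 3 - 2 * a := by linarith
  have h4 : ((4:ℝ) * (2 - a)) ≠ 0 := by positivity
  have hn0 : 0 < n := by rw [hn]; nlinarith
  have hs : 0 < 2 * n + d := by linarith
  have hs' : 0 < d + 2 * n := by linarith
  have hy2 : y ^ 2 = (2 * a - 1) / (4 * (2 - a)) := by
    rw [hy, mul_pow,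
      Real.sq_sqrt (div_nonneg (by linarith) (by linarith) : (0:ℝ) ≤ (2 * a - 1) / (2 - a)),
      show ((1:ℝ)/2)^2 = 1/4 by norm_num, div_mul_div_comm, one_mul]
  set b : ℝ := 3 * (3 - 2 * a) / (4 * (2 - a)) with hbdef
  have hb : 0 < b := by positivity
  have hbase : 1 * 1 - y ^ 2 = b := by
    rw [hy2, hbdef, eq_div_iff h4, sub_mul, div_mul_cancel₀ _ h4]
    ring
  have hb' : (1:ℝ) - y ^ 2 ≠ 0 := by
    have h : (1:ℝ) - y ^ 2 = b := by linarith [hbase]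
    rw [h]; exact hb.ne'
  have hb1 : (1:ℝ) - y ^ 2 = b := by linarith [hbase]
  have hne : y ^ 2 - 1 * 1 ≠ 0 := fun h => hb' (by linarith [h])
  have step1 : Scal d n 1 1 1 y = d / 2 + n * (5 - 2 * y ^ 2) / (8 * (1 - y ^ 2)) := by
    unfold Scal
    have hA : (16:ℝ) * 1 * (y ^ 2 - 1 * 1) ^ 2 ≠ 0 := by
      exact mul_ne_zero (by norm_num) (pow_ne_zero 2 hne)
    have hB : (8:ℝ) * (1 - y ^ 2) ≠ 0 := mul_ne_zero (by norm_num) hb'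
    rw [div_sub_div _ _ (by norm_num : (2:ℝ) * 1 ≠ 0) hA,
      div_add_div _ _ (two_ne_zero) hB,
      div_eq_div_iff (mul_ne_zero (by norm_num : (2:ℝ) * 1 ≠ 0) hA)
        (mul_ne_zero two_ne_zero hB)]
    ring
  have hScal : Scal d n 1 1 1 y = (3 * (2 * n + d) / 8) * b⁻¹ := by
    have hmain : d / 2 * b + n * (5 - 2 * y ^ 2) / 8 = 3 * (2 * n + d) / 8 := by
      rw [hy2, hn, hbdef]
      field_simp
      ring
    rw [step1, hb1, ← div_div, ← hmain]
    field_simp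
  unfold F
  rw [hScal, hbase]
  have hbinv : 4 * (2 - a) / (3 * (3 - 2 * a)) = b⁻¹ := by
    rw [hbdef, inv_div]
  rw [hbinv, Real.inv_rpow hb.le, ← Real.rpow_neg hb.le, ← Real.rpow_neg_one b,
    mul_assoc, ← Real.rpow_add hb]
  congr 1
  rw [hα]
  field_simp
  ring
end

section
/- Let a be a real number with 0 < a < 1/2, let d > 0, set n = 2d(1−a), and for ε ∈ {+1, −1} let x_ε = (1 + ε·√(1 − a(3−2a)))/(2a) (note 1 − a(3−2a) = (2a−1)(a−1) > 0 and x_ε > 0). Then for each ε ∈ {+1, −1}, the normalized scalar curvature at the diagonal Einstein metric (x_ε, x_ε, 1, 0) satisfies F(x_ε, x_ε, 0) = (2n+d)(4x_ε − 1)/(8·x_ε^{2α}), where α = (n+d)/(2n+d). -/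
open Real

lemma scal_diag_key (a d n x : ℝ) (hn : n = 2 * d * (1 - a)) (hx0 : x ≠ 0)
    (hquad : 4 * a * x ^ 2 = 4 * x - 3 + 2 * a) :
    Scal d n x x 1 0 * x ^ 2 = (2 * n + d) * (4 * x - 1) / 8 := by
  unfold Scal
  field_simp
  linear_combination (16 * x ^ 2) * ((2 * d * x ^ 2) * hquad + (-4 * x ^ 4 + 2 * x ^ 2) * hn)

/-- The value of the normalized scalar curvature at the diagonal Einstein metrics
`(x₊, x₊, 1, 0)` and `(x₋, x₋, 1, 0)`, where
`x_ε = (1 + ε·√(1 − a(3 − 2a)))/(2a)` for `ε = ±1`; moreover `1 − a(3 − 2a) > 0`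
and `x_ε > 0`, so the metrics are well defined. -/
theorem diagonal_scalN (a d n α : ℝ) (ha1 : 0 < a) (ha2 : a < 1/2) (hd : 0 < d)
    (hn : n = 2 * d * (1 - a)) (hα : α = (n + d) / (2 * n + d)) :
    ∀ ε : ℝ, ε = 1 ∨ ε = -1 →
      0 < 1 - a * (3 - 2 * a) ∧
      0 < (1 + ε * Real.sqrt (1 - a * (3 - 2 * a))) / (2 * a) ∧
      F d n ((1 + ε * Real.sqrt (1 - a * (3 - 2 * a))) / (2 * a))
            ((1 + ε * Real.sqrt (1 - a * (3 - 2 * a))) / (2 * a)) 0 =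
        (2 * n + d) *
            (4 * ((1 + ε * Real.sqrt (1 - a * (3 - 2 * a))) / (2 * a)) - 1) /
          (8 * ((1 + ε * Real.sqrt (1 - a * (3 - 2 * a))) / (2 * a)) ^ (2 * α)) := by
  intro ε hε
  have ht : 0 < 1 - a * (3 - 2 * a) := by nlinarith
  set s : ℝ := Real.sqrt (1 - a * (3 - 2 * a)) with hs
  have hs0 : 0 ≤ s := Real.sqrt_nonneg _
  have hs2 : s ^ 2 = 1 - a * (3 - 2 * a) := Real.sq_sqrt ht.le
  have hs1 : s < 1 := by nlinarith
  have hεsq : ε ^ 2 = 1 := by rcases hε with h | h <;> rw [h] <;> norm_num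
  have hnum : 0 < 1 + ε * s := by
    rcases hε with h | h <;> rw [h] <;> nlinarith
  set x : ℝ := (1 + ε * s) / (2 * a) with hxdef
  have hx : 0 < x := div_pos hnum (by linarith)
  refine ⟨ht, hx, ?_⟩
  have hx0 : x ≠ 0 := ne_of_gt hx
  have ha0 : (a : ℝ) ≠ 0 := ne_of_gt ha1
  have h2ax : 2 * a * x = 1 + ε * s := by
    rw [hxdef]; field_simp
  have hq : a * (4 * a * x ^ 2) = a * (4 * x - 3 + 2 * a) := by
    linear_combination (2 * a * x + ε * s - 1) * h2ax + s ^ 2 * hεsq + hs2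
  have hquad : 4 * a * x ^ 2 = 4 * x - 3 + 2 * a := mul_left_cancel₀ ha0 hq
  have hn0 : 0 < n := by nlinarith
  have hden : (2 : ℝ) * n + d ≠ 0 := by positivity
  have hden' : d + 2 * n ≠ 0 := by positivity
  have key : Scal d n x x 1 0 * x ^ 2 = (2 * n + d) * (4 * x - 1) / 8 :=
    scal_diag_key a d n x hn hx0 hquad
  have hsum : 2 * α + 2 * (n / (d + 2 * n)) = 2 := by
    rw [hα]
    field_simp
    ring
  have hxα : (0 : ℝ) < x ^ (2 * α) := Real.rpow_pos_of_pos hx _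
  have hxα0 : x ^ (2 * α) ≠ 0 := ne_of_gt hxα
  have hprod : x ^ (2 * α) * x ^ (2 * (n / (d + 2 * n))) = x ^ 2 := by
    rw [← Real.rpow_add hx, hsum, Real.rpow_two]
  have hpow : ((x * x - 0 ^ 2 : ℝ)) ^ (n / (d + 2 * n)) = x ^ (2 * (n / (d + 2 * n))) := by
    have h : (x * x - 0 ^ 2 : ℝ) = x ^ (2 : ℝ) := by rw [Real.rpow_two]; ring
    rw [h, ← Real.rpow_mul hx.le]
  show Scal d n x x 1 0 * ((x * x - 0 ^ 2 : ℝ)) ^ (n / (d + 2 * n)) = _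
  rw [hpow]
  have hstep : Scal d n x x 1 0 * x ^ (2 * (n / (d + 2 * n))) =
      (Scal d n x x 1 0 * (x ^ (2 * α) * x ^ (2 * (n / (d + 2 * n))))) / x ^ (2 * α) := by
    rw [mul_comm (x ^ (2 * α)), ← mul_assoc, mul_div_assoc,
      div_self hxα0, mul_one]
  rw [hstep, hprod, key, div_div]
end

section
/- Let a be a real number with 0 < a < 1/2, let d > 0, set n = 2d(1−a), and for ε ∈ {+1, −1} let x_ε = (1 + ε·√(1 − a(3−2a)))/(2a). Then for each ε ∈ {+1, −1}, all three first-order partial derivatives of F vanish at the point (x_ε, x_ε, 0); that is, the diagonal metrics (x_ε, x_ε, 1, 0) are critical points of the normalized scalar curvature F. -/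
open Real

lemma deriv1 (a d n x : ℝ) (ha1 : 0 < a) (ha2 : a < 1/2) (hd : 0 < d)
    (hn : n = 2 * d * (1 - a)) (hx : 0 < x)
    (hq : 4*a*x^2 - 4*x + (3 - 2*a) = 0) :
    deriv (fun t => F d n t x 0) x = 0 := by
  have hx0 : x ≠ 0 := hx.ne'
  have hn0 : 0 < n := by nlinarith
  have hdn : 0 < d + 2*n := by nlinarith
  set p : ℝ := n / (d + 2*n) with hp
  set A : ℝ := 4*x^2 - 8*x + 1 with hA
  have hf1 : HasDerivAt (fun t => Scal d n t x 1 0) (n/16 * (2/x^3 - 8/x^2)) x := by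
    have h1 : HasDerivAt (fun t : ℝ => (t^2)⁻¹) (-(↑2*x^1) / (x^2)^2) x :=
      (hasDerivAt_pow 2 x).inv (pow_ne_zero 2 hx0)
    have h2 : HasDerivAt (fun t : ℝ => t⁻¹) (-(x^2)⁻¹) x := hasDerivAt_inv hx0
    have hg := (hasDerivAt_const x (d/2)).sub
      (((h1.add_const (A*(x^2)⁻¹)).sub (h2.const_mul 8)).const_mul (n/16))
    have heq : (fun t => Scal d n t x 1 0)
        =ᶠ[nhds x] (fun t : ℝ => d/2 - n/16 * ((t^2)⁻¹ + A*(x^2)⁻¹ - 8*t⁻¹)) := by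
      filter_upwards [eventually_ne_nhds hx0] with t ht
      unfold Scal
      field_simp
      ring
    have h3 := hg.congr_of_eventuallyEq heq
    refine h3.congr_deriv ?_
    field_simp
    ring
  have hb : HasDerivAt (fun t : ℝ => t*x - 0^2) x x := by
    simpa only [one_mul, id] using ((hasDerivAt_id x).mul_const x).sub_const ((0:ℝ)^2)
  have hB : x*x - (0:ℝ)^2 ≠ 0 := by nlinarith
  have hv : HasDerivAt (fun t : ℝ => (t*x - 0^2) ^ p)
      (x * p * (x*x - 0^2) ^ (p-1)) x := hb.rpow_const (Or.inl hB)
  have htot := hf1.mul hv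
  have hFe : (fun t => F d n t x 0) = fun t => Scal d n t x 1 0 * (t*x - 0^2) ^ p := rfl
  rw [hFe, show (fun t => Scal d n t x 1 0 * (t*x - 0^2) ^ p) = ((fun t => Scal d n t x 1 0) * fun t => (t*x - 0^2) ^ p) from rfl, htot.deriv]
  have hBx : x*x - (0:ℝ)^2 = x*x := by norm_num
  rw [hBx] at *
  have hpow : (x*x) ^ p = (x*x)^(p-1) * (x*x) := by
    rw [← Real.rpow_add_one (by positivity : x*x ≠ (0:ℝ))]
    norm_num
  rw [hpow]
  have key : n/16 * (2/x^3 - 8/x^2) * (x*x) + Scal d n x x 1 0 * (p*x) = 0 := by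
    subst hn
    simp only [Scal, hp]
    have h54 : (1 + 2 ^ 2 * (1 - a) : ℝ) ≠ 0 := by nlinarith
    field_simp
    linear_combination (4*d*(1-a)*x^4) * hq
  linear_combination ((x*x)^(p-1)) * key

lemma Fsymm (d n x t : ℝ) : F d n x t 0 = F d n t x 0 := by
  unfold F Scal
  rw [mul_comm x t]
  ring_nf

lemma Feven (d n x t : ℝ) : F d n x x (-t) = F d n x x t := by
  unfold F Scal
  ring_nf

/-- The points `(x_ε, x_ε, 0)` for `ε = ±1`, where
`x_ε = (1 + ε·√(1 − a(3 − 2a)))/(2a)`, are critical points of the normalized scalar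
curvature `F` (corresponding to the diagonal Einstein metrics `(x_ε, x_ε, 1, 0)`). -/
theorem diagonal_critical (a d n : ℝ) (ha1 : 0 < a) (ha2 : a < 1/2) (hd : 0 < d)
    (hn : n = 2 * d * (1 - a)) :
    ∀ ε : ℝ, ε = 1 ∨ ε = -1 →
      ∀ i : Fin 3,
        pd i (F d n) ((1 + ε * Real.sqrt (1 - a * (3 - 2 * a))) / (2 * a))
          ((1 + ε * Real.sqrt (1 - a * (3 - 2 * a))) / (2 * a)) 0 = 0 := by
  intro ε hε i
  set s : ℝ := Real.sqrt (1 - a * (3 - 2 * a)) with hs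
  set x : ℝ := (1 + ε * s) / (2 * a) with hxdef
  have hs0 : 0 ≤ s := Real.sqrt_nonneg _
  have hs2 : s ^ 2 = 1 - a * (3 - 2 * a) := Real.sq_sqrt (by nlinarith)
  have hs1 : s < 1 := by nlinarith
  have hx : 0 < x := by
    rcases hε with h | h <;> subst h <;>
      exact div_pos (by nlinarith) (by linarith)
  have hq : 4*a*x^2 - 4*x + (3 - 2*a) = 0 := by
    rcases hε with h | h <;> subst h <;>
      · rw [hxdef]; field_simp; linear_combination 4 * hs2
  have key := deriv1 a d n x ha1 ha2 hd hn hx hq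
  fin_cases i
  · simpa [pd] using key
  · have hfun : (fun t => F d n x t 0) = (fun t => F d n t x 0) := funext fun t => Fsymm d n x t
    simp only [pd, show ((⟨1, by norm_num⟩ : Fin 3)) = 1 from rfl,
      Matrix.cons_val_one, Matrix.head_cons, Matrix.cons_val_zero]
    rw [hfun]; exact key
  · simp only [pd, show ((⟨2, by norm_num⟩ : Fin 3)) = 2 from rfl,
      Matrix.cons_val_two, Matrix.tail_cons, Matrix.head_cons]
    have h1 : (fun t => F d n x x t) = (fun t => F d n x x (-t)) :=
      funext fun t => (Feven d n x t).symm
    have h2 : deriv (fun t => F d n x x t) 0 = - deriv (fun t => F d n x x t) (-0) := by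
      conv_lhs => rw [h1]
      exact deriv_comp_neg (fun t => F d n x x t) 0
    simp only [neg_zero] at h2
    linarith
end
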